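/- arXiv:2002.01638 — 3 statements merged into one kernel-verified Lean document; each statement's English description precedes it below -/
import Mathlib

section
/- For γ ∈ ℝ^d and i, j ∈ {1,...,d}, the Dunkl operators commute on polynomials: 𝒟_i^γ 𝒟_j^γ p = 𝒟_j^γ 𝒟_i^γ p for every polynomial p in d variables. -/
open MeasureTheory Metric

noncomputable section

/-- Euclidean space ℝ^d. -/
abbrev E (d : ℕ) := EuclideanSpace ℝ (Fin d)

/-- The reflection flipping the sign of the j-th coordinate. -/
def reflCoord {d : ℕ} (j : Fin d) (x : E d) : E d := WithLp.toLp 2 (fun i => if i = j then -x i else x i)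

/-- The j-th partial derivative. -/
def pd {d : ℕ} (j : Fin d) (f : E d → ℝ) (x : E d) : ℝ :=
  fderiv ℝ f x (EuclideanSpace.single j 1)

/-- The difference quotient ρ_j(f)(x) = (f(x) - f(σ_j x))/x_j, extended by 2 ∂_j f(x)
on the hyperplane {x_j = 0}. -/
def rho {d : ℕ} (j : Fin d) (f : E d → ℝ) (x : E d) : ℝ :=
  if x j = 0 then 2 * pd j f x else (f x - f (reflCoord j x)) / x j

/-- The Dunkl operator 𝒟_j^γ. -/
def dunkl {d : ℕ} (γ : Fin d → ℝ) (j : Fin d) (f : E d → ℝ) (x : E d) : ℝ :=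
  pd j f x + γ j / 2 * rho j f x

/-- The weight W_{α,γ}(x) = (1-‖x‖²)^α ∏ |x_i|^{γ_i}. -/
def W {d : ℕ} (α : ℝ) (γ : Fin d → ℝ) (x : E d) : ℝ :=
  (1 - ‖x‖ ^ 2) ^ α * ∏ i, |x i| ^ (γ i)

/-- The weighted inner product ⟨u,v⟩_{α,γ} = ∫_{B^d} u v W_{α,γ}. -/
def ip {d : ℕ} (α : ℝ) (γ : Fin d → ℝ) (u v : E d → ℝ) : ℝ :=
  ∫ x in ball (0 : E d) 1, u x * v x * W α γ x

/-- Evaluation of a d-variate polynomial as a function on E d. -/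
def evalP {d : ℕ} (p : MvPolynomial (Fin d) ℝ) (x : E d) : ℝ :=
  MvPolynomial.eval (fun i => x i) p

/-- Membership in the orthogonal polynomial space 𝒱_k^{α,γ}: a polynomial of total
degree ≤ k that is ⟨·,·⟩_{α,γ}-orthogonal to all polynomials of total degree < k. -/
def memV {d : ℕ} (α : ℝ) (γ : Fin d → ℝ) (k : ℕ) (f : E d → ℝ) : Prop :=
  (∃ p : MvPolynomial (Fin d) ℝ, p.totalDegree ≤ k ∧ f = evalP p) ∧
  ∀ q : MvPolynomial (Fin d) ℝ, q.totalDegree < k → ip α γ f (evalP q) = 0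

/-- The adjoint (parameter-lowering) operator 𝒟_j^{α,γ;⋆}. -/
def dunklStar {d : ℕ} (α : ℝ) (γ : Fin d → ℝ) (j : Fin d) (f : E d → ℝ) (x : E d) : ℝ :=
  -(1 - ‖x‖ ^ 2) * dunkl γ j f x + 2 * (α + 1) * x j * f x

/-- The generalized angular derivative 𝒟_{i,j}^γ = x_i 𝒟_j^γ - x_j 𝒟_i^γ. -/
def dunklAng {d : ℕ} (γ : Fin d → ℝ) (i j : Fin d) (f : E d → ℝ) (x : E d) : ℝ :=
  x i * dunkl γ j f x - x j * dunkl γ i f x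

/-- λ^{α,γ} = α + (Σ γ_i)/2 + d/2. -/
def lam (d : ℕ) (α : ℝ) (γ : Fin d → ℝ) : ℝ := α + (∑ i, γ i) / 2 + d / 2

/-- Iterate of a single Dunkl operator. -/
def dunklPow {d : ℕ} (γ : Fin d → ℝ) (j : Fin d) : ℕ → (E d → ℝ) → E d → ℝ
  | 0, f => f
  | n + 1, f => dunkl γ j (dunklPow γ j n f)

/-- Iterated Dunkl operator 𝒟_a^γ for a multi-index a. -/
def dunklMulti {d : ℕ} (γ : Fin d → ℝ) (a : Fin d → ℕ) (f : E d → ℝ) : E d → ℝ :=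
  (List.finRange d).foldr (fun j g => dunklPow γ j (a j) g) f

/-- Iterate of a single partial derivative. -/
def pdPow {d : ℕ} (j : Fin d) : ℕ → (E d → ℝ) → E d → ℝ
  | 0, f => f
  | n + 1, f => pd j (pdPow j n f)

/-- Iterated partial derivative ∂_a for a multi-index a. -/
def pdMulti {d : ℕ} (a : Fin d → ℕ) (f : E d → ℝ) : E d → ℝ :=
  (List.finRange d).foldr (fun j g => pdPow j (a j) g) f

/-- The operator x·∇. -/
def xdel {d : ℕ} (u : E d → ℝ) (x : E d) : ℝ := ∑ i, x i * pd i u x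

/-- The Sturm–Liouville operator ℒ^{α,γ} = -Δ_h + (x·∇)² + 2λ^{α,γ} x·∇. -/
def Lop {d : ℕ} (α : ℝ) (γ : Fin d → ℝ) (u : E d → ℝ) (x : E d) : ℝ :=
  -(∑ i, dunkl γ i (dunkl γ i u) x) + xdel (xdel u) x + 2 * lam d α γ * xdel u x

/-!
On polynomials the difference quotient is exact: `X_j` divides `p - σ_j p`, so `ρ_j p` is a
polynomial, and `𝒟_j^γ` is the evaluation of the algebraic operator `∂_j + (γ_j/2) ρ_j`
(on `{x_j = 0}` the convention `ρ_j f = 2 ∂_j f` agrees with it, by differentiating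
`p - σ_j p = X_j ρ_j p`). For `i ≠ j`, `∂_i` commutes with `∂_j` and with `σ_j`, hence with `ρ_j`,
and `ρ_i ρ_j = ρ_j ρ_i` since `X_i X_j ρ_i ρ_j p = p - σ_i p - σ_j p + σ_i σ_j p` is symmetric
in `i` and `j`.
-/

namespace MvPolynomial

variable {R σ : Type*} [CommRing R] [DecidableEq σ]

def reflect (j : σ) : MvPolynomial σ R →ₐ[R] MvPolynomial σ R :=
  aeval fun k => if k = j then -X k else X k

@[simp]
lemma reflect_X_self (j : σ) : reflect j (X j : MvPolynomial σ R) = -X j := by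
  simp [reflect]

@[simp]
lemma reflect_X_of_ne {j k : σ} (h : k ≠ j) : reflect j (X k : MvPolynomial σ R) = X k := by
  simp [reflect, h]

lemma reflect_comm (i j : σ) (p : MvPolynomial σ R) :
    reflect i (reflect j p) = reflect j (reflect i p) := by
  suffices (reflect i).comp (reflect j) = (reflect j).comp (reflect (R := R) i) from
    AlgHom.congr_fun this p
  refine algHom_ext fun k => ?_
  by_cases hi : k = i <;> by_cases hj : k = j <;> simp_all

lemma eval_reflect (v : σ → R) (j : σ) (p : MvPolynomial σ R) :
    eval v (reflect j p) = eval (Function.update v j (-v j)) p := by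
  induction p using MvPolynomial.induction_on with
  | C a => simp
  | add p q hp hq => simp [hp, hq]
  | mul_X p k h =>
    by_cases hk : k = j
    · subst hk; simp [h]
    · simp [h, hk]

lemma X_dvd_sub_reflect (j : σ) (p : MvPolynomial σ R) : X j ∣ p - reflect j p := by
  suffices (Ideal.Quotient.mkₐ R (Ideal.span {X j})).comp (reflect j) =
      Ideal.Quotient.mkₐ R (Ideal.span {X j}) by
    rw [← Ideal.mem_span_singleton, ← Ideal.Quotient.eq]
    exact (AlgHom.congr_fun this p).symm
  refine algHom_ext fun k => ?_
  by_cases hk : k = j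
  · subst hk
    simp only [AlgHom.comp_apply, reflect_X_self, Ideal.Quotient.mkₐ_eq_mk, Ideal.Quotient.eq,
      Ideal.mem_span_singleton]
    exact dvd_sub (dvd_neg.mpr dvd_rfl) dvd_rfl
  · simp [hk]

def divDiff (j : σ) (p : MvPolynomial σ R) : MvPolynomial σ R :=
  (X_dvd_sub_reflect j p).choose

lemma X_mul_divDiff (j : σ) (p : MvPolynomial σ R) : X j * divDiff j p = p - reflect j p :=
  (X_dvd_sub_reflect j p).choose_spec.symm

lemma divDiff_eq_of_X_mul {j : σ} {p q : MvPolynomial σ R} (h : X j * q = p - reflect j p) :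
    divDiff j p = q :=
  X_mul_cancel_left_iff.mp ((X_mul_divDiff j p).trans h.symm)

lemma divDiff_add (j : σ) (p q : MvPolynomial σ R) :
    divDiff j (p + q) = divDiff j p + divDiff j q :=
  divDiff_eq_of_X_mul <| by rw [mul_add, X_mul_divDiff, X_mul_divDiff, map_add]; abel

lemma divDiff_smul (j : σ) (c : R) (p : MvPolynomial σ R) :
    divDiff j (c • p) = c • divDiff j p :=
  divDiff_eq_of_X_mul <| by rw [mul_smul_comm, X_mul_divDiff, map_smul, smul_sub]

lemma pderiv_comm (i j : σ) (p : MvPolynomial σ R) :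
    pderiv i (pderiv j p) = pderiv j (pderiv i p) := by
  have h : ⁅pderiv i, pderiv j⁆ = (0 : Derivation R (MvPolynomial σ R) (MvPolynomial σ R)) :=
    derivation_ext fun k => by
      rw [Derivation.commutator_apply]
      simp [pderiv_X, Pi.single_apply, apply_ite]
  rw [← sub_eq_zero, ← Derivation.commutator_apply, h, Derivation.zero_apply]

lemma pderiv_reflect_of_ne {i j : σ} (hij : i ≠ j) (p : MvPolynomial σ R) :
    pderiv i (reflect j p) = reflect j (pderiv i p) := by
  induction p using MvPolynomial.induction_on with
  | C a => simp
  | add p q hp hq => simp [hp, hq]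
  | mul_X p k h =>
    by_cases hk : k = j
    · subst hk; simp [h, pderiv_X, hij]
    · simp only [map_mul, Derivation.leibniz, reflect_X_of_ne hk, h, pderiv_X, smul_eq_mul]
      rw [Pi.single_apply]
      split_ifs <;> simp [hk]

lemma pderiv_reflect_self (j : σ) (p : MvPolynomial σ R) :
    pderiv j (reflect j p) = -reflect j (pderiv j p) := by
  induction p using MvPolynomial.induction_on with
  | C a => simp
  | add p q hp hq => rw [map_add, map_add, map_add, hp, hq, map_add, neg_add]
  | mul_X p k h =>
    by_cases hk : k = j
    · subst hk; simp [h]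
    · simp [h, pderiv_X, hk]

lemma pderiv_add_reflect_pderiv (j : σ) (p : MvPolynomial σ R) :
    pderiv j p + reflect j (pderiv j p) = divDiff j p + X j * pderiv j (divDiff j p) := by
  have h := congrArg (pderiv j) (X_mul_divDiff j p)
  rw [Derivation.leibniz, pderiv_X_self, map_sub, pderiv_reflect_self] at h
  rw [← sub_neg_eq_add, ← h, smul_eq_mul, smul_eq_mul, mul_one, add_comm]

lemma reflect_divDiff {i j : σ} (hij : i ≠ j) (p : MvPolynomial σ R) :
    reflect i (divDiff j p) = divDiff j (reflect i p) :=
  (divDiff_eq_of_X_mul <| by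
    rw [← reflect_X_of_ne hij.symm, ← map_mul, X_mul_divDiff, map_sub, reflect_comm]).symm

lemma pderiv_divDiff {i j : σ} (hij : i ≠ j) (p : MvPolynomial σ R) :
    pderiv i (divDiff j p) = divDiff j (pderiv i p) := by
  refine (divDiff_eq_of_X_mul ?_).symm
  have h := congrArg (pderiv i) (X_mul_divDiff j p)
  rwa [Derivation.leibniz, pderiv_X_of_ne hij.symm, smul_zero, add_zero, smul_eq_mul, map_sub,
    pderiv_reflect_of_ne hij] at h

lemma X_mul_X_mul_divDiff_divDiff {i j : σ} (hij : i ≠ j) (p : MvPolynomial σ R) :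
    X i * (X j * divDiff i (divDiff j p)) =
      p - reflect i p - reflect j p + reflect i (reflect j p) := by
  calc X i * (X j * divDiff i (divDiff j p))
      = X j * (divDiff j p - reflect i (divDiff j p)) := by rw [mul_left_comm, X_mul_divDiff]
    _ = X j * divDiff j p - X j * divDiff j (reflect i p) := by rw [mul_sub, reflect_divDiff hij]
    _ = _ := by rw [X_mul_divDiff, X_mul_divDiff, reflect_comm]; abel

lemma divDiff_comm (i j : σ) (p : MvPolynomial σ R) :
    divDiff i (divDiff j p) = divDiff j (divDiff i p) := by
  rcases eq_or_ne i j with rfl | hij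
  · rfl
  refine (X_mul_cancel_left_iff (i := j)).mp ((X_mul_cancel_left_iff (i := i)).mp ?_)
  rw [X_mul_X_mul_divDiff_divDiff hij, mul_left_comm, X_mul_X_mul_divDiff_divDiff hij.symm,
    reflect_comm]
  abel

def dunklOp (κ : σ → R) (j : σ) (p : MvPolynomial σ R) : MvPolynomial σ R :=
  pderiv j p + κ j • divDiff j p

lemma dunklOp_comm (κ : σ → R) (i j : σ) (p : MvPolynomial σ R) :
    dunklOp κ i (dunklOp κ j p) = dunklOp κ j (dunklOp κ i p) := by
  rcases eq_or_ne i j with rfl | hij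
  · rfl
  simp only [dunklOp, map_add, Derivation.map_smul, divDiff_add, divDiff_smul,
    pderiv_divDiff hij, pderiv_divDiff hij.symm]
  rw [pderiv_comm i j, divDiff_comm i j]
  module

end MvPolynomial

open MvPolynomial

section Evaluation

variable {d : ℕ}

lemma hasFDerivAt_evalP (p : MvPolynomial (Fin d) ℝ) (x : E d) :
    HasFDerivAt (evalP p) (∑ k, evalP (pderiv k p) x • EuclideanSpace.proj (𝕜 := ℝ) k) x := by
  induction p using MvPolynomial.induction_on with
  | C a =>
    rw [show evalP (C a) = fun _ : E d => a by ext; simp [evalP]]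
    simpa [evalP] using hasFDerivAt_const (𝕜 := ℝ) a x
  | add p q hp hq =>
    rw [show evalP (p + q) = fun y => evalP p y + evalP q y by ext; simp [evalP]]
    refine (hp.add hq).congr_fderiv ?_
    simp [evalP, add_smul, Finset.sum_add_distrib]
  | mul_X p k hp =>
    rw [show evalP (p * X k) = fun y => evalP p y * y k by ext; simp [evalP]]
    refine (hp.mul (EuclideanSpace.proj k).hasFDerivAt).congr_fderiv ?_
    ext v
    simp [evalP, pderiv_X, Pi.single_apply, Finset.sum_add_distrib, add_mul, apply_ite,
      Finset.mul_sum, mul_assoc]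

lemma pd_evalP (j : Fin d) (p : MvPolynomial (Fin d) ℝ) (x : E d) :
    pd j (evalP p) x = evalP (pderiv j p) x := by
  simp [pd, (hasFDerivAt_evalP p x).fderiv]

lemma ofLp_reflCoord (j : Fin d) (x : E d) :
    ⇑(reflCoord j x) = Function.update (⇑x) j (-x j) := by
  ext i
  by_cases h : i = j
  · subst h; simp [reflCoord]
  · simp [reflCoord, h]

lemma evalP_reflect (j : Fin d) (p : MvPolynomial (Fin d) ℝ) (x : E d) :
    evalP (reflect j p) x = evalP p (reflCoord j x) := by
  rw [evalP, evalP, eval_reflect, ofLp_reflCoord]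

lemma rho_evalP (j : Fin d) (p : MvPolynomial (Fin d) ℝ) (x : E d) :
    rho j (evalP p) x = evalP (divDiff j p) x := by
  by_cases hx : x j = 0
  · have h := congrArg (evalP · x) (pderiv_add_reflect_pderiv j p)
    have hfix : Function.update (⇑x) j (-x j) = ⇑x := by
      rw [hx, neg_zero, ← hx, Function.update_eq_self]
    simp only [evalP, map_add, map_mul, eval_X, eval_reflect, hfix] at h
    rw [rho, if_pos hx, pd_evalP, evalP, evalP]
    simp only [hx, zero_mul, add_zero] at h
    linarith
  · have h := congrArg (evalP · x) (X_mul_divDiff j p)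
    rw [rho, if_neg hx, div_eq_iff hx, ← evalP_reflect]
    simp only [evalP, map_mul, map_sub, eval_X] at h ⊢
    rw [← h, mul_comm]

lemma dunkl_evalP (γ : Fin d → ℝ) (j : Fin d) (p : MvPolynomial (Fin d) ℝ) :
    dunkl γ j (evalP p) = evalP (dunklOp (fun k => γ k / 2) j p) := by
  ext x
  rw [dunkl, pd_evalP, rho_evalP, dunklOp, evalP, evalP, evalP, map_add, smul_eval]

end Evaluation

theorem stmt3 (d : ℕ) (γ : Fin d → ℝ) (i j : Fin d) (p : MvPolynomial (Fin d) ℝ) :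
    ∀ x : E d, dunkl γ i (dunkl γ j (evalP p)) x = dunkl γ j (dunkl γ i (evalP p)) x := by
  intro x
  rw [dunkl_evalP, dunkl_evalP, dunkl_evalP, dunkl_evalP, dunklOp_comm]
end
end

section
/- Let a ∈ ℕ^d be a multi-index and f ∈ C^{|a|} on the closed unit ball of ℝ^d. Then the iterated Dunkl operator satisfies the sup-norm bound ‖𝒟_a^γ f‖_∞ ≤ (∏_{i=1}^d (1+|γ_i|)^{a_i}) ‖∂_a f‖_∞, where both sup-norms are over the closed unit ball. -/
open MeasureTheory Metric

noncomputable section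

/-! Let `σ_t` scale the `j`-th coordinate by `t`. The fundamental theorem of calculus along
`t ↦ f (σ_t x)` gives `ρ_j f x = ∫_{-1}^{1} ∂_j f (σ_t x) dt`, and differentiating under the
integral, `∂_j^n ρ_j f x = ∫_{-1}^{1} t^n ∂_j^{n+1} f (σ_t x) dt`. As `σ_t` maps the unit ball
into itself for `|t| ≤ 1`, the sup of `∂_j^n 𝒟_j^γ f` over the ball is at most
`(1 + |γ_j|) sup |∂_j^{n+1} f|`, and induction on `n` bounds `(𝒟_j^γ)^n f` by
`(1 + |γ_j|)^n sup |∂_j^n f|`. For `i ≠ j`, `∂_i` commutes with `σ_t`, hence (by the symmetry of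
second derivatives) with `𝒟_j^γ`, so these one-coordinate bounds chain along the coordinates.
-/

section OperatorCalculus

variable {X : Type*} [NormedAddCommGroup X] [NormedSpace ℝ X]

def LowersSmoothnessBy (k : ℕ) (T : (X → ℝ) → X → ℝ) : Prop :=
  ∀ (n : ℕ) (u : X → ℝ), ContDiff ℝ (n + k : ℕ) u → ContDiff ℝ n (T u)

def CommuteOnContDiff (k : ℕ) (T S : (X → ℝ) → X → ℝ) : Prop :=
  ∀ u : X → ℝ, ContDiff ℝ k u → T (S u) = S (T u)

def DominatedOnBall (c : ℝ) (k : ℕ) (T P : (X → ℝ) → X → ℝ) : Prop :=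
  ∀ u : X → ℝ, ContDiff ℝ k u → ∀ M : ℝ, (∀ y ∈ closedBall (0 : X) 1, |P u y| ≤ M) →
    ∀ x ∈ closedBall (0 : X) 1, |T u x| ≤ c * M

variable {k l m : ℕ} {T S P Q : (X → ℝ) → X → ℝ}

namespace LowersSmoothnessBy

theorem comp (hT : LowersSmoothnessBy k T) (hS : LowersSmoothnessBy l S) :
    LowersSmoothnessBy (k + l) (T ∘ S) := fun n u hu =>
  hT n (S u) (hS (n + k) u (by rwa [← add_assoc] at hu))

theorem iterate (hT : LowersSmoothnessBy 1 T) : ∀ n, LowersSmoothnessBy n T^[n]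
  | 0 => fun _ _ hu => hu
  | n + 1 => (iterate hT n).comp hT

theorem foldr {ι : Type*} {T : ι → (X → ℝ) → X → ℝ} {a : ι → ℕ} :
    ∀ L : List ι, (∀ i ∈ L, LowersSmoothnessBy (a i) (T i)) →
      LowersSmoothnessBy (L.map a).sum (fun u => L.foldr T u)
  | [], _ => fun _ _ hu => hu
  | i :: L, hT => by
    rw [List.map_cons, List.sum_cons]
    exact (hT i (by simp)).comp (foldr L fun k hk => hT k (by simp [hk]))

end LowersSmoothnessBy

namespace CommuteOnContDiff

theorem symm (h : CommuteOnContDiff k T S) : CommuteOnContDiff k S T :=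
  fun u hu => (h u hu).symm

theorem mono (h : CommuteOnContDiff k T S) (hkl : k ≤ l) : CommuteOnContDiff l T S :=
  fun u hu => h u (hu.of_le (by exact_mod_cast hkl))

theorem comp_right (hT : CommuteOnContDiff (m + k) P T) (hS : CommuteOnContDiff (m + l) P S)
    (hSl : LowersSmoothnessBy l S) : CommuteOnContDiff (m + k + l) P (T ∘ S) := fun u hu => by
  simp only [Function.comp_apply]
  rw [hT (S u) (hSl (m + k) u hu), hS u (hu.of_le (by exact_mod_cast by omega))]

theorem iterate_right (h : CommuteOnContDiff (m + 1) P T) (hT : LowersSmoothnessBy 1 T) :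
    ∀ n, CommuteOnContDiff (m + n) P T^[n]
  | 0 => fun _ _ => rfl
  | n + 1 => (iterate_right h hT n).comp_right h hT

theorem iterate (h : CommuteOnContDiff 2 P T) (hP : LowersSmoothnessBy 1 P)
    (hT : LowersSmoothnessBy 1 T) (m n : ℕ) : CommuteOnContDiff (m + n) P^[m] T^[n] :=
  have hn : CommuteOnContDiff (n + 1) T^[n] P :=
    (h.iterate_right (m := 1) hT n).symm.mono (by omega)
  (hn.iterate_right hP m).symm.mono (by omega)

theorem foldr_right {ι : Type*} {T : ι → (X → ℝ) → X → ℝ} {a : ι → ℕ} :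
    ∀ L : List ι, (∀ i ∈ L, CommuteOnContDiff (m + a i) P (T i)) →
      (∀ i ∈ L, LowersSmoothnessBy (a i) (T i)) →
      CommuteOnContDiff (m + (L.map a).sum) P (fun u => L.foldr T u)
  | [], _, _ => fun _ _ => rfl
  | i :: L, h, hT => by
    have hT' (k) (hk : k ∈ L) := hT k (by simp [hk])
    have := (h i (by simp)).comp_right (foldr_right L (fun k hk => h k (by simp [hk])) hT')
      (LowersSmoothnessBy.foldr L hT')
    rw [List.map_cons, List.sum_cons, ← add_assoc]
    exact this

end CommuteOnContDiff

namespace DominatedOnBall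

theorem comp {c₁ c₂ : ℝ} {T₁ P₁ T₂ : (X → ℝ) → X → ℝ} (h₁ : DominatedOnBall c₁ k T₁ P₁)
    (h₂ : DominatedOnBall c₂ (k + l) (P₁ ∘ T₂) Q) (hT₂ : LowersSmoothnessBy l T₂) :
    DominatedOnBall (c₁ * c₂) (k + l) (T₁ ∘ T₂) Q := fun u hu M hM x hx => by
  rw [mul_assoc]
  exact h₁ (T₂ u) (hT₂ k u hu) (c₂ * M) (h₂ u hu M hM) x hx

theorem comp_right {c : ℝ} (h : DominatedOnBall c k T P) (hS : LowersSmoothnessBy l S) :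
    DominatedOnBall c (l + k) (T ∘ S) (P ∘ S) := fun u hu =>
  h (S u) (hS k u (by rwa [add_comm]))

theorem congr {c : ℝ} {T' P' : (X → ℝ) → X → ℝ} (h : DominatedOnBall c k T P)
    (hT : ∀ u, ContDiff ℝ k u → T u = T' u) (hP : ∀ u, ContDiff ℝ k u → P u = P' u) :
    DominatedOnBall c k T' P' := fun u hu M hM => by
  rw [← hT u hu]
  exact h u hu M (by rwa [hP u hu])

theorem foldr {ι : Type*} {T P : ι → (X → ℝ) → X → ℝ} {c : ι → ℝ} {a : ι → ℕ} :
    ∀ L : List ι, L.Nodup →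
      (∀ i ∈ L, DominatedOnBall (c i) (a i) (T i) (P i)) →
      (∀ i ∈ L, LowersSmoothnessBy (a i) (T i)) → (∀ i ∈ L, LowersSmoothnessBy (a i) (P i)) →
      (∀ i ∈ L, ∀ k ∈ L, i ≠ k → CommuteOnContDiff (a i + a k) (P i) (T k)) →
      (∀ i ∈ L, ∀ k ∈ L, i ≠ k → CommuteOnContDiff (a i + a k) (P i) (P k)) →
      DominatedOnBall (L.map c).prod (L.map a).sum (fun u => L.foldr T u) (fun u => L.foldr P u)
  | [], _, _, _, _, _, _ => fun u _ M hM x hx => by simpa using hM x hx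
  | i :: L, hL, hdom, hT, hP, hPT, hPP => by
    obtain ⟨hiL, hL⟩ := List.nodup_cons.mp hL
    have mem {k} (hk : k ∈ L) : k ∈ i :: L := List.mem_cons_of_mem i hk
    have ne {k} (hk : k ∈ L) : i ≠ k := fun h => hiL (h ▸ hk)
    have hTL := LowersSmoothnessBy.foldr L fun k hk => hT k (mem hk)
    have hcommT := CommuteOnContDiff.foldr_right L
      (fun k hk => hPT i (by simp) k (mem hk) (ne hk)) (fun k hk => hT k (mem hk))
    have hcommP := CommuteOnContDiff.foldr_right L
      (fun k hk => hPP i (by simp) k (mem hk) (ne hk)) (fun k hk => hP k (mem hk))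
    have ih := foldr L hL (fun k hk => hdom k (mem hk)) (fun k hk => hT k (mem hk))
      (fun k hk => hP k (mem hk)) (fun k hk k' hk' => hPT k (mem hk) k' (mem hk'))
      (fun k hk k' hk' => hPP k (mem hk) k' (mem hk'))
    have h₂ := (ih.comp_right (hP i (by simp))).congr (fun u hu => (hcommT u hu).symm)
      (fun u hu => (hcommP u hu).symm)
    rw [List.map_cons, List.map_cons, List.sum_cons, List.prod_cons]
    exact (hdom i (by simp)).comp h₂ hTL

end DominatedOnBall

end OperatorCalculus

section ParametricIntegral

universe u

variable {E F G : Type u} [NormedAddCommGroup E] [NormedSpace ℝ E] [ProperSpace E]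
  [NormedAddCommGroup F] [NormedSpace ℝ F] [NormedAddCommGroup G] [NormedSpace ℝ G]
  {L : ℝ → E →L[ℝ] E} {a b : ℝ}

theorem hasFDerivAt_intervalIntegral_apply_comp (hL : Continuous L) {w : ℝ → F →L[ℝ] G}
    (hw : Continuous w) {v : E → F} (hv : ContDiff ℝ 1 v) (x₀ : E) :
    HasFDerivAt (fun x => ∫ t in a..b, w t (v (L t x)))
      (∫ t in a..b, (w t).comp ((fderiv ℝ v (L t x₀)).comp (L t))) x₀ := by
  have hF : ∀ x, Continuous fun t => w t (v (L t x)) := fun x => by fun_prop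
  have hF' : Continuous fun p : E × ℝ => (w p.2).comp ((fderiv ℝ v (L p.2 p.1)).comp (L p.2)) :=
    (hw.comp continuous_snd).clm_comp (((hv.continuous_fderiv one_ne_zero).comp
      ((hL.comp continuous_snd).clm_apply continuous_fst)).clm_comp (hL.comp continuous_snd))
  obtain ⟨C, hC⟩ := ((isCompact_closedBall x₀ 1).prod isCompact_uIcc).exists_bound_of_continuousOn
    hF'.continuousOn
  refine intervalIntegral.hasFDerivAt_integral_of_dominated_of_fderiv_le (bound := fun _ => C)
    (ball_mem_nhds x₀ one_pos) (.of_forall fun x => (hF x).aestronglyMeasurable)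
    ((hF x₀).intervalIntegrable _ _)
    (hF'.comp (Continuous.prodMk_right x₀)).aestronglyMeasurable
    (.of_forall fun t ht x hx => hC (x, t) ⟨ball_subset_closedBall hx, Set.uIoc_subset_uIcc ht⟩)
    intervalIntegrable_const (.of_forall fun t _ x _ => ?_)
  exact (w t).hasFDerivAt.comp x
    (((hv.differentiable one_ne_zero) _).hasFDerivAt.comp x (L t).hasFDerivAt)

theorem contDiff_intervalIntegral_apply_comp (hL : Continuous L) (n : ℕ) :
    ∀ {F G : Type u} [NormedAddCommGroup F] [NormedSpace ℝ F] [NormedAddCommGroup G]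
      [NormedSpace ℝ G] {w : ℝ → F →L[ℝ] G} {v : E → F},
      Continuous w → ContDiff ℝ n v → ContDiff ℝ n (fun x => ∫ t in a..b, w t (v (L t x))) := by
  induction n with
  | zero =>
    intro F G _ _ _ _ w v hw hv
    rw [Nat.cast_zero, contDiff_zero] at hv ⊢
    exact intervalIntegral.continuous_parametric_intervalIntegral_of_continuous' (by fun_prop) _ _
  | succ n ih =>
    intro F G _ _ _ _ w v hw hv
    have hderiv := hasFDerivAt_intervalIntegral_apply_comp (a := a) (b := b) hL hw
      (hv.of_le (by exact_mod_cast Nat.le_add_left 1 n))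
    -- the derivative is an integral of the same shape, with `fderiv ℝ v` in place of `v`
    set W : ℝ → (E →L[ℝ] F) →L[ℝ] (E →L[ℝ] G) := fun t =>
      ((ContinuousLinearMap.compL ℝ E E G).flip (L t)).comp
        (ContinuousLinearMap.compL ℝ E F G (w t))
    have hW : Continuous W :=
      ((ContinuousLinearMap.continuous _).comp hL).clm_comp
        ((ContinuousLinearMap.continuous _).comp hw)
    have hfderiv : fderiv ℝ (fun x => ∫ t in a..b, w t (v (L t x)))
        = fun x => ∫ t in a..b, W t (fderiv ℝ v (L t x)) := by
      funext x
      rw [(hderiv x).fderiv]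
      rfl
    rw [Nat.cast_succ, contDiff_succ_iff_fderiv]
    refine ⟨fun x => (hderiv x).differentiableAt, by simp, ?_⟩
    rw [hfderiv]
    exact ih hW (hv.fderiv_right le_rfl)

end ParametricIntegral

section CoordScale

variable {d : ℕ}

def coordScale (j : Fin d) (t : ℝ) : E d →L[ℝ] E d :=
  ContinuousLinearMap.id ℝ (E d) +
    (t - 1) • (EuclideanSpace.proj j).smulRight (EuclideanSpace.single j (1 : ℝ))

theorem coordScale_apply (j : Fin d) (t : ℝ) (x : E d) (i : Fin d) :
    coordScale j t x i = if i = j then t * x i else x i := by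
  simp only [coordScale, add_apply, ContinuousLinearMap.id_apply, smul_apply,
    ContinuousLinearMap.smulRight_apply, PiLp.proj_apply, PiLp.add_apply, PiLp.smul_apply,
    PiLp.single_apply, smul_eq_mul, mul_ite, mul_one, mul_zero]
  split_ifs with h <;> simp [h]; ring

theorem continuous_coordScale (j : Fin d) : Continuous (coordScale j) := by
  unfold coordScale; fun_prop

theorem coordScale_one (j : Fin d) (x : E d) : coordScale j 1 x = x := by
  ext i; rw [coordScale_apply]; split_ifs <;> simp

theorem coordScale_neg_one (j : Fin d) (x : E d) : coordScale j (-1) x = reflCoord j x := by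
  ext i; rw [coordScale_apply]; simp [reflCoord]

theorem coordScale_of_apply_eq_zero (j : Fin d) (t : ℝ) {x : E d} (hx : x j = 0) :
    coordScale j t x = x := by
  ext i; rw [coordScale_apply]; split_ifs with h <;> simp [h, hx]

theorem coordScale_single (j i : Fin d) (t : ℝ) :
    coordScale j t (EuclideanSpace.single i 1) =
      if i = j then t • EuclideanSpace.single i 1 else EuclideanSpace.single i 1 := by
  ext k; rw [coordScale_apply]; split_ifs <;> simp_all [PiLp.single_apply]

theorem hasDerivAt_coordScale (j : Fin d) (x : E d) (t : ℝ) :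
    HasDerivAt (fun s => coordScale j s x) (x j • EuclideanSpace.single j 1) t := by
  have h := (((hasDerivAt_id t).sub_const 1).smul_const
    (x j • EuclideanSpace.single j (1 : ℝ))).const_add x
  rw [one_smul] at h
  refine h.congr_of_eventuallyEq (.of_forall fun s => ?_)
  simp [coordScale]

theorem norm_coordScale_le (j : Fin d) {t : ℝ} (ht : |t| ≤ 1) (x : E d) :
    ‖coordScale j t x‖ ≤ ‖x‖ := by
  simp only [EuclideanSpace.norm_eq]
  gcongr with i
  rw [coordScale_apply]
  split_ifs
  · rw [norm_mul]; exact mul_le_of_le_one_left (norm_nonneg _) ht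
  · rfl

theorem coordScale_mem_closedBall (j : Fin d) {t : ℝ} (ht : |t| ≤ 1) {x : E d}
    (hx : x ∈ closedBall (0 : E d) 1) : coordScale j t x ∈ closedBall (0 : E d) 1 :=
  mem_closedBall_zero_iff.mpr ((norm_coordScale_le j ht x).trans (mem_closedBall_zero_iff.mp hx))

end CoordScale

section PartialDerivative

variable {d : ℕ}

theorem ContDiff.pd {n : WithTop ℕ∞} {u : E d → ℝ} (hu : ContDiff ℝ (n + 1) u) (j : Fin d) :
    ContDiff ℝ n (pd j u) :=
  (hu.fderiv_right le_rfl).clm_apply contDiff_const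

theorem lowersSmoothnessBy_pd (j : Fin d) : LowersSmoothnessBy 1 (pd j) := fun n _ hu =>
  ContDiff.pd (by exact_mod_cast hu) j

theorem pd_add_const_mul (j : Fin d) {g h : E d → ℝ} (hg : Differentiable ℝ g)
    (hh : Differentiable ℝ h) (c : ℝ) :
    pd j (fun y => g y + c * h y) = fun y => pd j g y + c * pd j h y := by
  funext y
  simp only [pd]
  rw [fderiv_fun_add (hg y) ((hh y).const_mul c), fderiv_const_mul (hh y)]
  rfl

theorem iterate_pd_add_const_mul (j : Fin d) (c : ℝ) :
    ∀ (n : ℕ) {g h : E d → ℝ}, ContDiff ℝ n g → ContDiff ℝ n h →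
      (pd j)^[n] (fun y => g y + c * h y) = fun y => (pd j)^[n] g y + c * (pd j)^[n] h y
  | 0, _, _, _, _ => rfl
  | n + 1, g, h, hg, hh => by
    have hdiff {u : E d → ℝ} (hu : ContDiff ℝ (n + 1 : ℕ) u) : Differentiable ℝ ((pd j)^[n] u) :=
      (LowersSmoothnessBy.iterate (lowersSmoothnessBy_pd j) n 1 u
        (by rwa [add_comm])).differentiable one_ne_zero
    rw [Function.iterate_succ_apply', Function.iterate_succ_apply', Function.iterate_succ_apply',
      iterate_pd_add_const_mul j c n (hg.of_le (by exact_mod_cast n.le_succ))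
        (hh.of_le (by exact_mod_cast n.le_succ)),
      pd_add_const_mul j (hdiff hg) (hdiff hh)]

theorem commuteOnContDiff_pd_pd (i j : Fin d) : CommuteOnContDiff 2 (pd i) (pd j) := by
  intro u hu
  funext x
  have hdiff : DifferentiableAt ℝ (fderiv ℝ u) x :=
    (hu.fderiv_right (m := 1) le_rfl).differentiable one_ne_zero x
  have hfderiv (v : E d) :
      fderiv ℝ (fun y => fderiv ℝ u y v) x = (fderiv ℝ (fderiv ℝ u) x).flip v := by
    rw [fderiv_clm_apply hdiff (differentiableAt_const v)]
    simp
  change fderiv ℝ (fun y => fderiv ℝ u y (EuclideanSpace.single j 1)) x (EuclideanSpace.single i 1)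
    = fderiv ℝ (fun y => fderiv ℝ u y (EuclideanSpace.single i 1)) x (EuclideanSpace.single j 1)
  rw [hfderiv, hfderiv, ContinuousLinearMap.flip_apply, ContinuousLinearMap.flip_apply]
  exact (hu.contDiffAt.isSymmSndFDerivAt (by simp)) _ _
theorem pdPow_eq_iterate (j : Fin d) : ∀ n, pdPow j n = (pd j)^[n]
  | 0 => rfl
  | n + 1 => by
    funext u
    rw [Function.iterate_succ_apply', ← pdPow_eq_iterate j n]
    rfl

end PartialDerivative

section ScaledIntegral

variable {d : ℕ}

def scaledIntegral (j : Fin d) (c : ℝ → ℝ) (v : E d → ℝ) (x : E d) : ℝ :=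
  ∫ t in (-1 : ℝ)..1, c t * v (coordScale j t x)

theorem contDiff_scaledIntegral (j : Fin d) {c : ℝ → ℝ} (hc : Continuous c) {n : ℕ}
    {v : E d → ℝ} (hv : ContDiff ℝ n v) : ContDiff ℝ n (scaledIntegral j c v) :=
  contDiff_intervalIntegral_apply_comp (continuous_coordScale j) n
    (w := fun t => c t • ContinuousLinearMap.id ℝ ℝ) (by fun_prop) hv

theorem pd_scaledIntegral (i j : Fin d) {c : ℝ → ℝ} (hc : Continuous c) {v : E d → ℝ}
    (hv : ContDiff ℝ 1 v) (x : E d) :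
    pd i (scaledIntegral j c v) x = ∫ t in (-1 : ℝ)..1,
      c t * fderiv ℝ v (coordScale j t x) (coordScale j t (EuclideanSpace.single i 1)) := by
  have hw : Continuous fun t => c t • ContinuousLinearMap.id ℝ ℝ := by fun_prop
  have hint : IntervalIntegrable (fun t => (c t • ContinuousLinearMap.id ℝ ℝ).comp
      ((fderiv ℝ v (coordScale j t x)).comp (coordScale j t))) volume (-1) 1 :=
    (hw.clm_comp (((hv.continuous_fderiv one_ne_zero).comp ((continuous_coordScale j).clm_apply
      continuous_const)).clm_comp (continuous_coordScale j))).intervalIntegrable _ _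
  change fderiv ℝ (fun x => ∫ t in (-1 : ℝ)..1,
    (c t • ContinuousLinearMap.id ℝ ℝ) (v (coordScale j t x))) x _ = _
  rw [(hasFDerivAt_intervalIntegral_apply_comp (continuous_coordScale j) hw hv x).fderiv,
    ContinuousLinearMap.intervalIntegral_apply hint]
  rfl

theorem pd_scaledIntegral_self (j : Fin d) {c : ℝ → ℝ} (hc : Continuous c) {v : E d → ℝ}
    (hv : ContDiff ℝ 1 v) :
    pd j (scaledIntegral j c v) = scaledIntegral j (fun t => t * c t) (pd j v) := by
  funext x
  rw [pd_scaledIntegral j j hc hv]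
  refine intervalIntegral.integral_congr fun t _ => ?_
  simp only [coordScale_single, if_pos, map_smul, smul_eq_mul, pd]
  ring

theorem pd_scaledIntegral_of_ne {i j : Fin d} (hij : i ≠ j) {c : ℝ → ℝ} (hc : Continuous c)
    {v : E d → ℝ} (hv : ContDiff ℝ 1 v) :
    pd i (scaledIntegral j c v) = scaledIntegral j c (pd i v) := by
  funext x
  rw [pd_scaledIntegral i j hc hv]
  refine intervalIntegral.integral_congr fun t _ => ?_
  simp only [coordScale_single, if_neg hij]
  rfl

theorem abs_scaledIntegral_le (j : Fin d) {c : ℝ → ℝ} (hc : ∀ t, |t| ≤ 1 → |c t| ≤ 1)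
    {v : E d → ℝ} {M : ℝ} (hv : ∀ y ∈ closedBall (0 : E d) 1, |v y| ≤ M) {x : E d}
    (hx : x ∈ closedBall (0 : E d) 1) : |scaledIntegral j c v x| ≤ 2 * M := by
  have hbound : ∀ t ∈ Set.uIoc (-1 : ℝ) 1, ‖c t * v (coordScale j t x)‖ ≤ M := by
    intro t ht
    rw [Set.uIoc_of_le (by norm_num)] at ht
    have ht' : |t| ≤ 1 := abs_le.mpr ⟨ht.1.le, ht.2⟩
    rw [Real.norm_eq_abs, abs_mul]
    exact (mul_le_of_le_one_left (abs_nonneg _) (hc t ht')).trans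
      (hv _ (coordScale_mem_closedBall j ht' hx))
  have := intervalIntegral.norm_integral_le_of_norm_le_const hbound
  norm_num at this
  rw [scaledIntegral]
  linarith

end ScaledIntegral

section Dunkl

variable {d : ℕ}

theorem rho_eq_scaledIntegral (j : Fin d) {u : E d → ℝ} (hu : ContDiff ℝ 1 u) :
    rho j u = scaledIntegral j (fun _ => 1) (pd j u) := by
  funext x
  have hpd : Continuous (pd j u) := (hu.continuous_fderiv one_ne_zero).clm_apply continuous_const
  by_cases hx : x j = 0
  · simp only [rho, hx, if_true, scaledIntegral, coordScale_of_apply_eq_zero j _ hx, one_mul,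
      intervalIntegral.integral_const]
    norm_num
  · have hderiv (t : ℝ) : HasDerivAt (fun s => u (coordScale j s x))
        (x j * pd j u (coordScale j t x)) t := by
      have := ((hu.differentiable one_ne_zero) _).hasFDerivAt.comp_hasDerivAt t
        (hasDerivAt_coordScale j x t)
      rwa [map_smul, smul_eq_mul] at this
    have hftc := intervalIntegral.integral_eq_sub_of_hasDerivAt (fun t _ => hderiv t)
      ((continuous_const.mul (hpd.comp ((continuous_coordScale j).clm_apply
        continuous_const))).intervalIntegrable (-1) 1)
    rw [intervalIntegral.integral_const_mul, coordScale_one, coordScale_neg_one] at hftc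
    simp only [rho, hx, if_false, scaledIntegral, one_mul]
    field_simp
    linarith

theorem lowersSmoothnessBy_rho (j : Fin d) : LowersSmoothnessBy 1 (rho j) := fun n u hu => by
  rw [rho_eq_scaledIntegral j (hu.of_le (by exact_mod_cast Nat.le_add_left 1 n))]
  exact contDiff_scaledIntegral j continuous_const (lowersSmoothnessBy_pd j n u hu)

theorem lowersSmoothnessBy_dunkl (γ : Fin d → ℝ) (j : Fin d) :
    LowersSmoothnessBy 1 (dunkl γ j) := fun n u hu =>
  (lowersSmoothnessBy_pd j n u hu).add (contDiff_const.mul (lowersSmoothnessBy_rho j n u hu))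

theorem iterate_pd_rho (j : Fin d) : ∀ (n : ℕ) {u : E d → ℝ}, ContDiff ℝ (n + 1 : ℕ) u →
    (pd j)^[n] (rho j u) = scaledIntegral j (· ^ n) ((pd j)^[n + 1] u)
  | 0, u, hu => by
    simpa using rho_eq_scaledIntegral j (by exact_mod_cast hu)
  | n + 1, u, hu => by
    have hv : ContDiff ℝ 1 ((pd j)^[n + 1] u) :=
      LowersSmoothnessBy.iterate (lowersSmoothnessBy_pd j) (n + 1) 1 u (by rwa [add_comm])
    rw [Function.iterate_succ_apply', iterate_pd_rho j n (hu.of_le (by exact_mod_cast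
      (n + 1).le_succ)), pd_scaledIntegral_self j (continuous_pow n) hv,
      ← Function.iterate_succ_apply' (pd j)]
    simp only [← pow_succ']

theorem commuteOnContDiff_pd_rho {i j : Fin d} (hij : i ≠ j) :
    CommuteOnContDiff 2 (pd i) (rho j) := fun u hu => by
  have hpd : ContDiff ℝ 1 (pd j u) := hu.pd j
  rw [rho_eq_scaledIntegral j (hu.of_le (by norm_num)), rho_eq_scaledIntegral j (hu.pd i),
    pd_scaledIntegral_of_ne hij continuous_const hpd, commuteOnContDiff_pd_pd i j u hu]

theorem commuteOnContDiff_pd_dunkl (γ : Fin d → ℝ) {i j : Fin d} (hij : i ≠ j) :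
    CommuteOnContDiff 2 (pd i) (dunkl γ j) := fun u hu => by
  have hpd : Differentiable ℝ (pd j u) := (hu.pd j).differentiable one_ne_zero
  have hrho : Differentiable ℝ (rho j u) :=
    (lowersSmoothnessBy_rho j 1 u hu).differentiable one_ne_zero
  change pd i (fun x => pd j u x + γ j / 2 * rho j u x) = fun x => _ + _
  rw [pd_add_const_mul i hpd hrho, commuteOnContDiff_pd_pd i j u hu,
    commuteOnContDiff_pd_rho hij u hu]

theorem dunklPow_eq_iterate (γ : Fin d → ℝ) (j : Fin d) :
    ∀ n, dunklPow γ j n = (dunkl γ j)^[n]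
  | 0 => rfl
  | n + 1 => by
    funext u
    rw [Function.iterate_succ_apply', ← dunklPow_eq_iterate γ j n]
    rfl

end Dunkl

section Estimates

variable {d : ℕ}

theorem dominatedOnBall_iterate_pd_comp_dunkl (γ : Fin d → ℝ) (j : Fin d) (n : ℕ) :
    DominatedOnBall (1 + |γ j|) (n + 1) ((pd j)^[n] ∘ dunkl γ j) (pd j)^[n + 1] := by
  intro u hu M hM x hx
  have hsplit : (pd j)^[n] (dunkl γ j u) x
      = (pd j)^[n + 1] u x + γ j / 2 * (pd j)^[n] (rho j u) x := by
    change (pd j)^[n] (fun y => pd j u y + γ j / 2 * rho j u y) x = _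
    rw [iterate_pd_add_const_mul j _ n (lowersSmoothnessBy_pd j n u hu)
      (lowersSmoothnessBy_rho j n u hu), Function.iterate_succ_apply]
  have hrho : |(pd j)^[n] (rho j u) x| ≤ 2 * M := by
    rw [iterate_pd_rho j n hu]
    refine abs_scaledIntegral_le j (fun t ht => ?_) hM hx
    simpa [abs_pow] using pow_le_one₀ (abs_nonneg t) ht
  calc |(Function.comp (pd j)^[n] (dunkl γ j)) u x|
      ≤ |(pd j)^[n + 1] u x| + |γ j| / 2 * |(pd j)^[n] (rho j u) x| := by
        rw [Function.comp_apply, hsplit]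
        refine (abs_add_le _ _).trans_eq ?_
        rw [abs_mul, abs_div, abs_two]
    _ ≤ M + |γ j| / 2 * (2 * M) := by gcongr; exact hM x hx
    _ = (1 + |γ j|) * M := by ring

theorem dominatedOnBall_iterate_dunkl (γ : Fin d → ℝ) (j : Fin d) :
    ∀ n : ℕ, DominatedOnBall ((1 + |γ j|) ^ n) n (dunkl γ j)^[n] (pd j)^[n]
  | 0 => fun u _ M hM x hx => by simpa using hM x hx
  | n + 1 => by
    rw [pow_succ]
    exact (dominatedOnBall_iterate_dunkl γ j n).comp
      (dominatedOnBall_iterate_pd_comp_dunkl γ j n) (lowersSmoothnessBy_dunkl γ j)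

end Estimates

theorem stmt5 (d : ℕ) (γ : Fin d → ℝ) (a : Fin d → ℕ) (f : E d → ℝ)
    (hf : ContDiff ℝ ((∑ i, a i : ℕ) : ℕ∞) f) :
    ∀ x ∈ closedBall (0 : E d) 1,
      |dunklMulti γ a f x| ≤ (∏ i, (1 + |γ i|) ^ a i) *
        sSup ((fun y => |pdMulti a f y|) '' closedBall (0 : E d) 1) := by
  have hsmooth (i : Fin d) := LowersSmoothnessBy.iterate (lowersSmoothnessBy_pd i) (a i)
  have hdom := DominatedOnBall.foldr (List.finRange d) (List.nodup_finRange d)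
    (c := fun i => (1 + |γ i|) ^ a i)
    (fun i _ => dominatedOnBall_iterate_dunkl γ i (a i))
    (fun i _ => LowersSmoothnessBy.iterate (lowersSmoothnessBy_dunkl γ i) (a i))
    (fun i _ => hsmooth i)
    (fun i _ k _ hik => CommuteOnContDiff.iterate (commuteOnContDiff_pd_dunkl γ hik)
      (lowersSmoothnessBy_pd i) (lowersSmoothnessBy_dunkl γ k) (a i) (a k))
    (fun i _ k _ _ => CommuteOnContDiff.iterate (commuteOnContDiff_pd_pd i k)
      (lowersSmoothnessBy_pd i) (lowersSmoothnessBy_pd k) (a i) (a k))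
  have hP := LowersSmoothnessBy.foldr (List.finRange d) fun i _ => hsmooth i
  have hf' : ContDiff ℝ ((List.finRange d).map a).sum f := by
    rw [← Fin.sum_univ_def]; exact_mod_cast hf
  have hbdd := ((isCompact_closedBall (0 : E d) 1).image_of_continuousOn
    (hP 0 f (by rwa [zero_add])).continuous.abs.continuousOn).bddAbove
  simp only [dunklMulti, pdMulti, dunklPow_eq_iterate, pdPow_eq_iterate, Fin.prod_univ_def]
  exact hdom f hf' _ fun y hy => le_csSup hbdd ⟨y, hy, rfl⟩
end
end

section
/- Let α > -1 and γ ∈ (-1,∞)^d. The weight W_{α,γ}(x) = (1-‖x‖²)^α ∏_{i=1}^d |x_i|^{γ_i} is integrable over the unit ball B^d, with ∫_{B^d} W_{α,γ}(x) dx = [∏_{i=1}^d Γ((γ_i+1)/2) / Γ((d+Σγ_i)/2)] · B((d+Σ_i γ_i)/2, α+1), where B is the Beta function. -/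
open MeasureTheory Metric

noncomputable section

/-!
Write `x = (t, y)` with `t` the first coordinate. For fixed `y`, the substitution
`t = √((1 - ‖y‖²) v)` turns the `t`-integral into `B((γ₀ + 1)/2, α + 1)` times the weight in
dimension `d - 1` with `α` raised to `α + (γ₀ + 1)/2`, so by induction on `d` the Beta factors
telescope into the Gamma quotient. Working with lower Lebesgue integrals throughout, Tonelli needs
no integrability, and integrability of the weight follows from the finiteness of the result.
-/

open Set
open scoped ENNReal
open ProbabilityTheory (beta beta_pos)

theorem setLIntegral_Ioo_rpow_mul_one_sub_rpow {a b : ℝ} (ha : 0 < a) (hb : 0 < b) :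
    ∫⁻ x in Ioo (0 : ℝ) 1, ENNReal.ofReal (x ^ (a - 1) * (1 - x) ^ (b - 1)) =
      ENNReal.ofReal (beta a b) := by
  have hB := beta_pos ha hb
  have h := ProbabilityTheory.lintegral_betaPDF_eq_one ha hb
  simp_rw [ProbabilityTheory.lintegral_betaPDF, mul_assoc,
    ENNReal.ofReal_mul (one_div_pos.2 hB).le] at h
  rw [lintegral_const_mul' _ _ ENNReal.ofReal_ne_top] at h
  calc _ = ENNReal.ofReal (beta a b) * ENNReal.ofReal (1 / beta a b) *
        ∫⁻ x in Ioo (0 : ℝ) 1, ENNReal.ofReal (x ^ (a - 1) * (1 - x) ^ (b - 1)) := by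
        rw [← ENNReal.ofReal_mul hB.le, mul_one_div_cancel hB.ne', ENNReal.ofReal_one, one_mul]
    _ = ENNReal.ofReal (beta a b) := by rw [mul_assoc, h, mul_one]

theorem lintegral_eq_two_mul_setLIntegral_Ioi_of_even {g : ℝ → ℝ≥0∞} (hg : ∀ t, g (-t) = g t) :
    ∫⁻ t, g t = 2 * ∫⁻ t in Ioi 0, g t := by
  have hneg : ∫⁻ t in Iio 0, g t = ∫⁻ t in Ioi 0, g t := by
    rw [← (Measure.measurePreserving_neg (volume : Measure ℝ)).setLIntegral_comp_preimage_emb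
      (Homeomorph.neg ℝ).measurableEmbedding]
    simp [hg]
  rw [← lintegral_add_compl _ measurableSet_Iio, compl_Iio, ← setLIntegral_congr Ioi_ae_eq_Ici,
    hneg, two_mul]

theorem image_const_mul_sqrt_Ioo {s : ℝ} (hs : 0 < s) :
    (fun v => s * √v) '' Ioo 0 1 = Ioo 0 s := by
  ext t
  constructor
  · rintro ⟨v, hv, rfl⟩
    have : √v < 1 := (Real.sqrt_lt' one_pos).2 (by simpa using hv.2)
    exact ⟨by positivity [hv.1], by nlinarith [Real.sqrt_pos.2 hv.1]⟩
  · rintro ⟨ht0, hts⟩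
    refine ⟨(t / s) ^ 2, ⟨by positivity, ?_⟩, ?_⟩
    · rw [div_pow, div_lt_one (by positivity)]; nlinarith
    · simp only [Real.sqrt_sq (div_pos ht0 hs).le]; field_simp

theorem sqrt_substitution_integrand_eq {s r γ α : ℝ} (hs : 0 < s) (hr : 0 < r) (hr1 : r < 1) :
    s / (2 * r) * ((s * r) ^ γ * (s ^ 2 - (s * r) ^ 2) ^ α) =
      (s ^ 2) ^ (α + (γ + 1) / 2) / 2 *
        ((r ^ 2) ^ ((γ + 1) / 2 - 1) * (1 - r ^ 2) ^ (α + 1 - 1)) := by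
  have hsq : ∀ {x : ℝ} (y : ℝ), 0 < x → (x ^ 2) ^ y = x ^ (2 * y) := fun y hx => by
    rw [← Real.rpow_two, ← Real.rpow_mul hx.le]
  rw [hsq _ hs, hsq _ hr, show s ^ 2 - (s * r) ^ 2 = s ^ 2 * (1 - r ^ 2) by ring,
    Real.mul_rpow hs.le hr.le, Real.mul_rpow (by positivity) (by nlinarith), hsq _ hs,
    show 2 * (α + (γ + 1) / 2) = (2 * α + γ) + 1 by ring, Real.rpow_add_one hs.ne',
    Real.rpow_add hs, show 2 * ((γ + 1) / 2 - 1) = γ - 1 by ring, Real.rpow_sub_one hr.ne',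
    add_sub_cancel_right]
  field_simp

theorem lintegral_indicator_abs_rpow_mul_sub_sq_rpow {γ α c : ℝ} (hγ : -1 < γ) (hα : -1 < α)
    (hc : 0 < c) :
    ∫⁻ t, {t : ℝ | t ^ 2 < c}.indicator (fun t => ENNReal.ofReal (|t| ^ γ * (c - t ^ 2) ^ α)) t =
      ENNReal.ofReal (c ^ (α + (γ + 1) / 2) * beta ((γ + 1) / 2) (α + 1)) := by
  set s := √c
  have hs : 0 < s := Real.sqrt_pos.2 hc
  have hcs : c = s ^ 2 := (Real.sq_sqrt hc.le).symm
  have hIoi : ∀ t ∈ Ioi (0 : ℝ),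
      {t : ℝ | t ^ 2 < c}.indicator (fun t => ENNReal.ofReal (|t| ^ γ * (c - t ^ 2) ^ α)) t =
        (Ioo 0 s).indicator (fun t => ENNReal.ofReal (t ^ γ * (s ^ 2 - t ^ 2) ^ α)) t := by
    intro t ht
    have hts_iff : t ^ 2 < c ↔ t < s := by
      rw [hcs]; exact pow_lt_pow_iff_left₀ (le_of_lt ht) hs.le two_ne_zero
    by_cases hts : t < s
    · rw [indicator_of_mem (show t ∈ {t : ℝ | t ^ 2 < c} from hts_iff.2 hts),
        indicator_of_mem (show t ∈ Ioo 0 s from ⟨ht, hts⟩), abs_of_pos ht, hcs]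
    · rw [indicator_of_notMem (show t ∉ {t : ℝ | t ^ 2 < c} from mt hts_iff.1 hts),
        indicator_of_notMem (fun h => hts h.2)]
  have hderiv : ∀ v ∈ Ioo (0 : ℝ) 1,
      HasDerivWithinAt (fun v => s * √v) (s / (2 * √v)) (Ioo 0 1) v := fun v hv =>
    ((Real.hasDerivAt_sqrt hv.1.ne').const_mul s).hasDerivWithinAt.congr_deriv (by ring)
  have hmono : MonotoneOn (fun v => s * √v) (Ioo 0 1) := fun v _ w _ hvw =>
    mul_le_mul_of_nonneg_left (Real.sqrt_le_sqrt hvw) hs.le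
  have hintegrand : ∀ v ∈ Ioo (0 : ℝ) 1,
      ENNReal.ofReal (s / (2 * √v)) * ENNReal.ofReal ((s * √v) ^ γ * (s ^ 2 - (s * √v) ^ 2) ^ α) =
        ENNReal.ofReal (c ^ (α + (γ + 1) / 2) / 2) *
          ENNReal.ofReal (v ^ ((γ + 1) / 2 - 1) * (1 - v) ^ (α + 1 - 1)) := by
    intro v hv
    have hr : 0 < √v := Real.sqrt_pos.2 hv.1
    have hr1 : √v < 1 := (Real.sqrt_lt' one_pos).2 (by simpa using hv.2)
    rw [← ENNReal.ofReal_mul (by positivity), ← ENNReal.ofReal_mul (by positivity),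
      sqrt_substitution_integrand_eq hs hr hr1, Real.sq_sqrt hv.1.le, hcs]
  rw [lintegral_eq_two_mul_setLIntegral_Ioi_of_even (fun t => by simp [indicator_apply]),
    setLIntegral_congr_fun measurableSet_Ioi hIoi, lintegral_indicator measurableSet_Ioo,
    Measure.restrict_restrict measurableSet_Ioo, Ioo_inter_Ioi, max_self,
    ← image_const_mul_sqrt_Ioo hs,
    lintegral_image_eq_lintegral_deriv_mul_of_monotoneOn measurableSet_Ioo hderiv hmono,
    setLIntegral_congr_fun measurableSet_Ioo hintegrand,
    lintegral_const_mul' _ _ ENNReal.ofReal_ne_top,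
    setLIntegral_Ioo_rpow_mul_one_sub_rpow (by linarith) (by linarith), ← mul_assoc,
    ← ENNReal.ofReal_ofNat 2, ← ENNReal.ofReal_mul zero_le_two,
    ← ENNReal.ofReal_mul (by positivity)]
  ring_nf

theorem lintegral_fin_succ_eq_lintegral_lintegral_cons {d : ℕ} {f : (Fin (d + 1) → ℝ) → ℝ≥0∞}
    (hf : Measurable f) :
    ∫⁻ x, f x = ∫⁻ y : Fin d → ℝ, ∫⁻ t : ℝ, f (Fin.cons t y) := by
  rw [volume_pi, ← ((measurePreserving_piFinSuccAbove (fun _ => volume) 0).symm).lintegral_comp hf,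
    ← volume_pi, lintegral_prod_symm _ (by fun_prop)]
  simp [Fin.insertNthEquiv, Fin.insertNth_zero']

/-- The weight `W` transported to `Fin d → ℝ`, set to zero off the unit ball. -/
def ballWeight {d : ℕ} (α : ℝ) (γ : Fin d → ℝ) : (Fin d → ℝ) → ℝ≥0∞ :=
  {x | ∑ i, x i ^ 2 < 1}.indicator
    fun x => ENNReal.ofReal ((1 - ∑ i, x i ^ 2) ^ α * ∏ i, |x i| ^ γ i)

theorem measurable_ballWeight {d : ℕ} (α : ℝ) (γ : Fin d → ℝ) : Measurable (ballWeight α γ) :=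
  Measurable.indicator (by fun_prop) (measurableSet_lt (by fun_prop) measurable_const)

theorem ballWeight_cons {d : ℕ} (α : ℝ) (γ : Fin (d + 1) → ℝ) (t : ℝ) (y : Fin d → ℝ) :
    ballWeight α γ (Fin.cons t y) = ENNReal.ofReal (∏ i, |y i| ^ γ i.succ) *
      {t : ℝ | t ^ 2 < 1 - ∑ i, y i ^ 2}.indicator
        (fun t => ENNReal.ofReal (|t| ^ γ 0 * ((1 - ∑ i, y i ^ 2) - t ^ 2) ^ α)) t := by
  simp only [ballWeight, indicator_apply, mem_ofPred_eq, Fin.sum_univ_succ, Fin.prod_univ_succ,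
    Fin.cons_zero, Fin.cons_succ]
  split_ifs with h1 h2 h2
  · rw [← ENNReal.ofReal_mul (by positivity)]
    congr 1; ring_nf
  · exact absurd (by linarith) h2
  · exact absurd (by linarith) h1
  · simp

theorem lintegral_ballWeight_cons {d : ℕ} {α : ℝ} (hα : -1 < α) {γ : Fin (d + 1) → ℝ}
    (hγ : -1 < γ 0) (y : Fin d → ℝ) :
    ∫⁻ t, ballWeight α γ (Fin.cons t y) =
      ENNReal.ofReal (beta ((γ 0 + 1) / 2) (α + 1)) *
        ballWeight (α + (γ 0 + 1) / 2) (fun i => γ i.succ) y := by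
  simp_rw [ballWeight_cons]
  rw [lintegral_const_mul' _ _ ENNReal.ofReal_ne_top]
  by_cases hy : ∑ i, y i ^ 2 < 1
  · rw [lintegral_indicator_abs_rpow_mul_sub_sq_rpow hγ hα (by linarith), ballWeight,
      indicator_of_mem (show y ∈ {x : Fin d → ℝ | ∑ i, x i ^ 2 < 1} from hy),
      ← ENNReal.ofReal_mul (Finset.prod_nonneg fun i _ => by positivity),
      ← ENNReal.ofReal_mul (beta_pos (by linarith) (by linarith)).le]
    congr 1; ring
  · have hempty : {t : ℝ | t ^ 2 < 1 - ∑ i, y i ^ 2} = ∅ := by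
      ext t
      simp only [mem_ofPred_eq, mem_empty_iff_false, iff_false, not_lt]
      nlinarith [sq_nonneg t]
    rw [hempty, ballWeight,
      indicator_of_notMem (show y ∉ {x : Fin d → ℝ | ∑ i, x i ^ 2 < 1} from hy)]
    simp

theorem lintegral_ballWeight {d : ℕ} {α : ℝ} (hα : -1 < α) {γ : Fin d → ℝ} (hγ : ∀ i, -1 < γ i) :
    ∫⁻ x, ballWeight α γ x = ENNReal.ofReal ((∏ i, Real.Gamma ((γ i + 1) / 2)) *
      Real.Gamma (α + 1) / Real.Gamma (∑ i, (γ i + 1) / 2 + (α + 1))) := by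
  induction d generalizing α with
  | zero =>
    have hG : Real.Gamma (α + 1) ≠ 0 := (Real.Gamma_pos_of_pos (by linarith)).ne'
    simp [ballWeight, volume_pi, hG]
  | succ d ih =>
    have ha : 0 < (γ 0 + 1) / 2 := by linarith [hγ 0]
    rw [lintegral_fin_succ_eq_lintegral_lintegral_cons (measurable_ballWeight α γ)]
    simp_rw [lintegral_ballWeight_cons hα (hγ 0)]
    rw [lintegral_const_mul _ (measurable_ballWeight _ _), ih (by linarith) (fun i => hγ i.succ),
      ← ENNReal.ofReal_mul (beta_pos ha (by linarith)).le, Fin.prod_univ_succ, Fin.sum_univ_succ]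
    set A := (γ 0 + 1) / 2
    set S := ∑ i : Fin d, (γ i.succ + 1) / 2
    have hG : Real.Gamma (A + (α + 1)) ≠ 0 := (Real.Gamma_pos_of_pos (by linarith)).ne'
    rw [ProbabilityTheory.beta, show α + A + 1 = A + (α + 1) by ring,
      show A + S + (α + 1) = S + (A + (α + 1)) by ring]
    congr 1
    field_simp

theorem setLIntegral_ball_ofReal_W {d : ℕ} (α : ℝ) (γ : Fin d → ℝ) :
    ∫⁻ x in ball (0 : E d) 1, ENNReal.ofReal (W α γ x) = ∫⁻ x, ballWeight α γ x := by
  rw [← lintegral_indicator measurableSet_ball,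
    ← (PiLp.volume_preserving_toLp (Fin d)).lintegral_comp_emb
      (MeasurableEquiv.toLp 2 (Fin d → ℝ)).measurableEmbedding]
  congr 1
  ext y
  have hnorm : ‖WithLp.toLp 2 y‖ ^ 2 = ∑ i, y i ^ 2 := EuclideanSpace.real_norm_sq_eq _
  have hmem : WithLp.toLp 2 y ∈ ball (0 : E d) 1 ↔ y ∈ {x : Fin d → ℝ | ∑ i, x i ^ 2 < 1} := by
    rw [mem_ball_zero_iff, mem_ofPred_eq, ← hnorm, sq_lt_one_iff₀ (norm_nonneg _)]
  by_cases hy : y ∈ {x : Fin d → ℝ | ∑ i, x i ^ 2 < 1}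
  · rw [ballWeight, indicator_of_mem hy, indicator_of_mem (hmem.2 hy), W, hnorm]
  · rw [ballWeight, indicator_of_notMem hy, indicator_of_notMem (mt hmem.1 hy)]

theorem integrableOn_and_setIntegral_eq_of_setLIntegral_ofReal_eq {X : Type*}
    [MeasurableSpace X] {μ : Measure X} {s : Set X} {f : X → ℝ} {b : ℝ}
    (hfm : AEStronglyMeasurable f (μ.restrict s)) (hf : ∀ᵐ x ∂μ.restrict s, 0 ≤ f x) (hb : 0 ≤ b)
    (h : ∫⁻ x in s, ENNReal.ofReal (f x) ∂μ = ENNReal.ofReal b) :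
    IntegrableOn f s μ ∧ ∫ x in s, f x ∂μ = b :=
  ⟨(lintegral_ofReal_ne_top_iff_integrable hfm hf).1 (h ▸ ENNReal.ofReal_ne_top),
    by rw [integral_eq_lintegral_of_nonneg_ae hf hfm, h, ENNReal.toReal_ofReal hb]⟩

theorem W_nonneg_of_mem_ball {d : ℕ} (α : ℝ) (γ : Fin d → ℝ) {x : E d}
    (hx : x ∈ ball (0 : E d) 1) : 0 ≤ W α γ x := by
  have : ‖x‖ < 1 := mem_ball_zero_iff.1 hx
  have : 0 ≤ 1 - ‖x‖ ^ 2 := by nlinarith [norm_nonneg x]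
  exact mul_nonneg (by positivity) (Finset.prod_nonneg fun i _ => by positivity)

theorem measurable_W {d : ℕ} (α : ℝ) (γ : Fin d → ℝ) : Measurable (W α γ) := by
  unfold W; fun_prop

theorem stmt6 (d : ℕ) (hd : 1 ≤ d) (α : ℝ) (hα : -1 < α) (γ : Fin d → ℝ)
    (hγ : ∀ i, -1 < γ i) :
    IntegrableOn (W α γ) (ball (0 : E d) 1) ∧
    ∫ x in ball (0 : E d) 1, W α γ x =
      (∏ i, Real.Gamma ((γ i + 1) / 2)) / Real.Gamma (((d : ℝ) + ∑ i, γ i) / 2) *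
        (Real.Gamma (((d : ℝ) + ∑ i, γ i) / 2) * Real.Gamma (α + 1) /
          Real.Gamma (((d : ℝ) + ∑ i, γ i) / 2 + (α + 1))) := by
  have hS : 0 < ((d : ℝ) + ∑ i, γ i) / 2 := by
    have : ∑ _i : Fin d, (-1 : ℝ) < ∑ i, γ i :=
      Finset.sum_lt_sum_of_nonempty (Finset.univ_nonempty_iff.2 (Fin.pos_iff_nonempty.1 hd))
        fun i _ => hγ i
    simp only [Finset.sum_const, Finset.card_univ, Fintype.card_fin, nsmul_eq_mul] at this
    linarith
  have hsum : ∑ i, (γ i + 1) / 2 = ((d : ℝ) + ∑ i, γ i) / 2 := by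
    rw [← Finset.sum_div, Finset.sum_add_distrib]; simp [add_comm]
  have hpos : 0 < (∏ i, Real.Gamma ((γ i + 1) / 2)) * Real.Gamma (α + 1) /
      Real.Gamma (∑ i, (γ i + 1) / 2 + (α + 1)) :=
    div_pos (mul_pos (Finset.prod_pos fun i _ => Real.Gamma_pos_of_pos (by linarith [hγ i]))
      (Real.Gamma_pos_of_pos (by linarith))) (Real.Gamma_pos_of_pos (by rw [hsum]; linarith))
  obtain ⟨hint, hval⟩ := integrableOn_and_setIntegral_eq_of_setLIntegral_ofReal_eq
    (measurable_W α γ).aestronglyMeasurable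
    (ae_restrict_of_forall_mem measurableSet_ball fun x hx => W_nonneg_of_mem_ball α γ hx) hpos.le
    ((setLIntegral_ball_ofReal_W α γ).trans (lintegral_ballWeight hα hγ))
  refine ⟨hint, hval.trans ?_⟩
  have hG := (Real.Gamma_pos_of_pos hS).ne'
  rw [hsum]
  field_simp
end
end
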